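/- arXiv:1710.02275 — 6 statements merged into one kernel-verified Lean document; each statement's English description precedes it below -/
import Mathlib

section
/- For all complex numbers k ≠ -2, the point (c, λ) with c = 2(k-1)/(k+2) and λ = (k+1)/((k-2)(3k+4)) (when k ≠ 2, -4/3) satisfies the polynomial equation 4λ(c+7)(2c-1) + (c-2)(c+4) = 0. -/
/-!
With `c = 2(k-1)/(k+2)`, every factor of the curve equation is a simple fraction in `k`:
`c + 7 = 3(3k+4)/(k+2)` and `2c - 1 = 3(k-2)/(k+2)` cancel the denominator of `λ`, so
`4λ(c+7)(2c-1) = 36(k+1)/(k+2)²`, while `(c-2)(c+4) = -36(k+1)/(k+2)²`.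
-/

/-- The parafermion algebra `N^k(sl_2)` truncation curve: for `k ≠ -2, 2, -4/3`,
the point `(c, λ)` with `c = 2(k-1)/(k+2)`, `λ = (k+1)/((k-2)(3k+4))` satisfies
`4λ(c+7)(2c-1) + (c-2)(c+4) = 0`. -/
theorem stmt0 (k : ℂ) (hk : k ≠ -2) (hk2 : k ≠ 2) (hk3 : k ≠ -4/3)
    (c l : ℂ)
    (hc : c = 2*(k-1)/(k+2))
    (hl : l = (k+1)/((k-2)*(3*k+4))) :
    4*l*(c+7)*(2*c-1) + (c-2)*(c+4) = 0 := by
  have hk_add : k + 2 ≠ 0 := fun h => hk (eq_neg_of_add_eq_zero_left h)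
  have hk_sub : k - 2 ≠ 0 := sub_ne_zero.mpr hk2
  have hk_lin : 3*k + 4 ≠ 0 := fun h => hk3 (by linear_combination h / 3)
  have hc7 : c + 7 = 3*(3*k+4)/(k+2) := by rw [hc]; field_simp; ring
  have hc1 : 2*c - 1 = 3*(k-2)/(k+2) := by rw [hc]; field_simp; ring
  have hl_mul : l * ((k-2)*(3*k+4)) = k+1 := by
    rw [hl, div_mul_cancel₀ _ (mul_ne_zero hk_sub hk_lin)]
  have h_first_term : 4*l*(c+7)*(2*c-1) = 36*(k+1)/(k+2)^2 := by
    calc 4*l*(c+7)*(2*c-1) = 36 * (l*((k-2)*(3*k+4))) / (k+2)^2 := by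
          rw [hc7, hc1]; field_simp; ring
      _ = 36*(k+1)/(k+2)^2 := by rw [hl_mul]
  have h_second_term : (c-2)*(c+4) = -36*(k+1)/(k+2)^2 := by
    rw [hc]; field_simp; ring
  rw [h_first_term, h_second_term]
  ring
end

section
/- For all complex numbers ℓ with 2ℓ+3 ≠ 0, ℓ ≠ 1, and 4ℓ+3 ≠ 0, the point (c,λ) with c = -3(2ℓ-1)²/(2ℓ+3) and λ = (2ℓ+1)(2ℓ+3)/(8(ℓ-1)(4ℓ+3)) satisfies 48 + 8c + 240λ - 62cλ - 5c²λ + 300λ² + 524cλ² + 40c²λ² = 0. -/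
/-- The Bershadsky–Polyakov Heisenberg coset truncation curve: for `2ℓ+3 ≠ 0`, `ℓ ≠ 1`,
`4ℓ+3 ≠ 0`, the point `(c,λ)` with `c = -3(2ℓ-1)²/(2ℓ+3)` and
`λ = (2ℓ+1)(2ℓ+3)/(8(ℓ-1)(4ℓ+3))` satisfies the displayed polynomial equation. -/
theorem stmt2 (t : ℂ) (h1 : 2*t+3 ≠ 0) (h2 : t ≠ 1) (h3 : 4*t+3 ≠ 0)
    (c l : ℂ)
    (hc : c = -3*(2*t-1)^2/(2*t+3))
    (hl : l = (2*t+1)*(2*t+3)/(8*(t-1)*(4*t+3))) :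
    48 + 8*c + 240*l - 62*c*l - 5*c^2*l + 300*l^2 + 524*c*l^2 + 40*c^2*l^2 = 0 := by
  have h2 : t - 1 ≠ 0 := sub_ne_zero.mpr h2
  subst hc hl
  -- `field_simp` normalises the denominator `4*t+3` to `t*4+3` and looks for that form
  field_simp [show t * 4 + 3 ≠ 0 by rwa [mul_comm]]
  ring
end

section
/- For distinct integers n, m ≥ 3, the simultaneous solutions (c,λ) ∈ ℂ² of λ(n-2)(3n²-n-2+c(n+2)) = (n-1)(n+1) and λ(m-2)(3m²-m-2+c(m+2)) = (m-1)(m+1) consist of exactly one point, namely c = -(m-1)(n-1)(m+n+mn)/(m+n) and λ = -(m+n)/((m-2)(n-2)(2m+2n+mn)). -/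
/-!
Subtracting suitable multiples of the two curve equations eliminates the constant terms and
leaves `3 λ (n - m) (c (m + n) + (m - 1)(n - 1)(m + n + mn)) = 0`. Since `λ ≠ 0` on the curve
(its right-hand side `(n - 1)(n + 1)` is nonzero), this pins down `c`, and substituting `c` back
into either equation makes it linear in `λ`.
-/

/-- The truncation curve of `W^k(sl_N, f_prin)` in the `(c, λ)`-plane. -/
def OnTruncationCurve {K : Type*} [Field K] (N c l : K) : Prop :=
  l * (N - 2) * (3 * N ^ 2 - N - 2 + c * (N + 2)) = (N - 1) * (N + 1)

namespace OnTruncationCurve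

variable {K : Type*} [Field K] {N M c l : K}

theorem ne_zero (h : OnTruncationCurve N c l) (hN1 : N - 1 ≠ 0) (hN1' : N + 1 ≠ 0) : l ≠ 0 := by
  rintro rfl
  exact mul_ne_zero hN1 hN1' (by simpa [OnTruncationCurve] using h.symm)

theorem c_mul_eq (hN : OnTruncationCurve N c l) (hM : OnTruncationCurve M c l)
    (h3 : (3 : K) ≠ 0) (hNM : N ≠ M) (hN1 : N - 1 ≠ 0) (hN1' : N + 1 ≠ 0) :
    c * (M + N) = -((M - 1) * (N - 1) * (M + N + M * N)) := by
  have key : (l * 3 * (N - M)) * (c * (M + N) + (M - 1) * (N - 1) * (M + N + M * N)) = 0 := by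
    unfold OnTruncationCurve at hN hM
    linear_combination (M ^ 2 - 1) * hN - (N ^ 2 - 1) * hM
  have hfactor : l * 3 * (N - M) ≠ 0 :=
    mul_ne_zero (mul_ne_zero (hN.ne_zero hN1 hN1') h3) (sub_ne_zero.mpr hNM)
  linear_combination (mul_eq_zero.mp key).resolve_left hfactor

theorem l_mul_eq (hN : OnTruncationCurve N c l)
    (hc : c * (M + N) = -((M - 1) * (N - 1) * (M + N + M * N)))
    (hN1 : N - 1 ≠ 0) (hN1' : N + 1 ≠ 0) :
    l * ((M - 2) * (N - 2) * (2 * M + 2 * N + M * N)) = -(M + N) := by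
  have key : ((N - 1) * (N + 1)) * (l * ((M - 2) * (N - 2) * (2 * M + 2 * N + M * N)) + (M + N))
      = 0 := by
    unfold OnTruncationCurve at hN
    linear_combination -(M + N) * hN + l * (N - 2) * (N + 2) * hc
  linear_combination (mul_eq_zero.mp key).resolve_left (mul_ne_zero hN1 hN1')

theorem and_iff (h3 : (3 : K) ≠ 0) (hNM : N ≠ M) (hN1 : N - 1 ≠ 0) (hN1' : N + 1 ≠ 0)
    (hN2 : N - 2 ≠ 0) (hM2 : M - 2 ≠ 0) (hMN : M + N ≠ 0) (hK : 2 * M + 2 * N + M * N ≠ 0) :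
    OnTruncationCurve N c l ∧ OnTruncationCurve M c l ↔
      c = -((M - 1) * (N - 1) * (M + N + M * N)) / (M + N) ∧
      l = -(M + N) / ((M - 2) * (N - 2) * (2 * M + 2 * N + M * N)) := by
  constructor
  · rintro ⟨hN, hM⟩
    have hc := hN.c_mul_eq hM h3 hNM hN1 hN1'
    refine ⟨eq_div_of_mul_eq hMN hc, eq_div_of_mul_eq ?_ (hN.l_mul_eq hc hN1 hN1')⟩
    exact mul_ne_zero (mul_ne_zero hM2 hN2) hK
  · rintro ⟨rfl, rfl⟩
    -- `field_simp` needs `hK` in the normal form it gives the denominator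
    have hK' : (M + N) * 2 + M * N ≠ 0 := by convert hK using 1; ring
    constructor <;>
    · unfold OnTruncationCurve
      field_simp
      ring

end OnTruncationCurve

/-- For distinct integers `n, m ≥ 3`, the truncation curves of `W^k(sl_n, f_prin)` and
`W^{k'}(sl_m, f_prin)` intersect in exactly one point. -/
theorem stmt5 (n m : ℕ) (hn : 3 ≤ n) (hm : 3 ≤ m) (hnm : n ≠ m) (c l : ℂ) :
    (l*((n:ℂ)-2)*(3*(n:ℂ)^2-n-2+c*((n:ℂ)+2)) = ((n:ℂ)-1)*((n:ℂ)+1) ∧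
     l*((m:ℂ)-2)*(3*(m:ℂ)^2-m-2+c*((m:ℂ)+2)) = ((m:ℂ)-1)*((m:ℂ)+1)) ↔
    (c = -(((m:ℂ)-1)*((n:ℂ)-1)*((m:ℂ)+n+m*n))/((m:ℂ)+n) ∧
     l = -((m:ℂ)+n)/(((m:ℂ)-2)*((n:ℂ)-2)*(2*(m:ℂ)+2*n+m*n))) := by
  have sub_ne (k j : ℕ) (h : k ≠ j) : (k : ℂ) - j ≠ 0 := sub_ne_zero.mpr (by exact_mod_cast h)
  refine OnTruncationCurve.and_iff (by norm_num) (by exact_mod_cast hnm)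
    (by exact_mod_cast sub_ne n 1 (by omega)) (Nat.cast_add_one_ne_zero n)
    (by exact_mod_cast sub_ne n 2 (by omega)) (by exact_mod_cast sub_ne m 2 (by omega))
    (by exact_mod_cast (by omega : m + n ≠ 0)) ?_
  exact_mod_cast (by positivity : 2 * m + 2 * n + m * n ≠ 0)
end

section
/- For integers n, m ≥ 3 with n ≠ m, if k = -n + (m+n)/n and k' = -m + (m+n)/m, then the central charges -(n-1)(n²+nk-n-1)(n²+k+nk)/(n+k) and -(m-1)(m²+mk'-m-1)(m²+k'+mk')/(m+k') are equal. -/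
/-- For distinct integers `n, m ≥ 3`, at levels `k = -n + (m+n)/n` and `k' = -m + (m+n)/m`,
the central charges of `W^k(sl_n, f_prin)` and `W^{k'}(sl_m, f_prin)` coincide. -/
theorem stmt6 (n m : ℕ) (hn : 3 ≤ n) (hm : 3 ≤ m) (hnm : n ≠ m)
    (k k' : ℂ)
    (hk : k = -(n:ℂ) + ((m:ℂ)+n)/(n:ℂ))
    (hk' : k' = -(m:ℂ) + ((m:ℂ)+n)/(m:ℂ)) :
    -(((n:ℂ)-1)*((n:ℂ)^2+n*k-n-1)*((n:ℂ)^2+k+n*k))/((n:ℂ)+k)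
      = -(((m:ℂ)-1)*((m:ℂ)^2+m*k'-m-1)*((m:ℂ)^2+k'+m*k'))/((m:ℂ)+k') := by
  have hn0 : (n:ℂ) ≠ 0 := Nat.cast_ne_zero.mpr (by omega)
  have hm0 : (m:ℂ) ≠ 0 := Nat.cast_ne_zero.mpr (by omega)
  have hmn : (m:ℂ) + (n:ℂ) ≠ 0 := by
    have : ((m+n : ℕ) : ℂ) ≠ 0 := Nat.cast_ne_zero.mpr (by omega)
    push_cast at this; exact this
  subst hk hk'
  field_simp
  ring
end

section
/- For every integer n ≥ 3, the system λ(n-2)(3n²-n-2+c(n+2)) = (n-1)(n+1) together with 4λ(c+7)(2c-1) + (c-2)(c+4) = 0 has exactly three solutions (c,λ) in ℂ²: (2(n-1)/(n+2), (n+1)/((n-2)(3n+4))), (-2(2n-1)/(n-2), (n-1)/((n-4)(3n-2))), and (-(3n+1), -(n-1)(n+1)/(4(n-2)(2n+1))), where in the second point one assumes n ≠ 4. -/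
/-!
Eliminating `λ` between the two equations leaves a cubic in `c` that splits into the linear
factors `(n + 2) c - 2 (n - 1)`, `(n - 2) c + 2 (2 n - 1)` and `c + 3 n + 1`. At each of the three
roots the first equation is linear in `λ` with a coefficient that does not vanish for `n ≥ 3`,
`n ≠ 4`, so it determines `λ`; the resulting three points also satisfy the second equation.
The computation is done over any field, with `x` in place of `n`.
-/

variable {K : Type*} [Field K] {x : K}

def OnWTruncationCurve (x c l : K) : Prop :=
  l * (x - 2) * (3 * x ^ 2 - x - 2 + c * (x + 2)) = (x - 1) * (x + 1)

def OnParafermionTruncationCurve (c l : K) : Prop :=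
  4 * l * (c + 7) * (2 * c - 1) + (c - 2) * (c + 4) = 0

theorem cubic_eq_zero_of_onWTruncationCurve_of_onParafermionTruncationCurve {c l : K}
    (hW : OnWTruncationCurve x c l) (hN : OnParafermionTruncationCurve c l) :
    ((x + 2) * c - 2 * (x - 1)) * ((x - 2) * c + 2 * (2 * x - 1)) * (c + 3 * x + 1) = 0 := by
  unfold OnWTruncationCurve at hW
  unfold OnParafermionTruncationCurve at hN
  linear_combination
    (x - 2) * (3 * x ^ 2 - x - 2 + c * (x + 2)) * hN - 4 * (c + 7) * (2 * c - 1) * hW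

theorem eq_or_eq_or_eq_of_cubic_eq_zero {c : K} (hp2 : x + 2 ≠ 0) (hm2 : x - 2 ≠ 0)
    (h : ((x + 2) * c - 2 * (x - 1)) * ((x - 2) * c + 2 * (2 * x - 1)) * (c + 3 * x + 1) = 0) :
    c = 2 * (x - 1) / (x + 2) ∨ c = -(2 * (2 * x - 1)) / (x - 2) ∨ c = -(3 * x + 1) := by
  rcases mul_eq_zero.1 h with h | h
  · rcases mul_eq_zero.1 h with h | h
    · exact Or.inl <| (eq_div_iff hp2).2 (by linear_combination h)
    · exact Or.inr <| Or.inl <| (eq_div_iff hm2).2 (by linear_combination h)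
  · exact Or.inr <| Or.inr <| by linear_combination h

theorem onParafermionTruncationCurve_div_div_iff {p q N D : K} (hq : q ≠ 0) (hD : D ≠ 0) :
    OnParafermionTruncationCurve (p / q) (N / D) ↔
      4 * N * (p + 7 * q) * (2 * p - q) + (p - 2 * q) * (p + 4 * q) * D = 0 := by
  rw [OnParafermionTruncationCurve]
  field_simp
  ring_nf

section FirstPoint

variable (hp2 : x + 2 ≠ 0) (hm2 : x - 2 ≠ 0) (h34 : 3 * x + 4 ≠ 0)
include hp2 hm2 h34

theorem onWTruncationCurve_first_iff {l : K} (hm1 : x - 1 ≠ 0) :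
    OnWTruncationCurve x (2 * (x - 1) / (x + 2)) l ↔
      l = (x + 1) / ((x - 2) * (3 * x + 4)) := by
  rw [OnWTruncationCurve, div_mul_cancel₀ _ hp2, eq_div_iff (mul_ne_zero hm2 h34)]
  constructor
  · intro h
    exact mul_right_cancel₀ hm1 (by linear_combination h)
  · intro h
    linear_combination (x - 1) * h

theorem onParafermionTruncationCurve_first :
    OnParafermionTruncationCurve (2 * (x - 1) / (x + 2)) ((x + 1) / ((x - 2) * (3 * x + 4))) := by
  rw [onParafermionTruncationCurve_div_div_iff hp2 (mul_ne_zero hm2 h34)]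
  ring

end FirstPoint

section SecondPoint

variable (hm2 : x - 2 ≠ 0) (hm4 : x - 4 ≠ 0) (h32 : 3 * x - 2 ≠ 0)
include hm2 hm4 h32

theorem onWTruncationCurve_second_iff {l : K} (hp1 : x + 1 ≠ 0) :
    OnWTruncationCurve x (-(2 * (2 * x - 1)) / (x - 2)) l ↔
      l = (x - 1) / ((x - 4) * (3 * x - 2)) := by
  have hcoeff : (x - 2) * (3 * x ^ 2 - x - 2 + -(2 * (2 * x - 1)) / (x - 2) * (x + 2))
      = (x - 4) * (3 * x - 2) * (x + 1) := by
    field_simp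
    ring
  rw [OnWTruncationCurve, mul_assoc, hcoeff, eq_div_iff (mul_ne_zero hm4 h32)]
  constructor
  · intro h
    exact mul_right_cancel₀ hp1 (by linear_combination h)
  · intro h
    linear_combination (x + 1) * h

theorem onParafermionTruncationCurve_second :
    OnParafermionTruncationCurve (-(2 * (2 * x - 1)) / (x - 2))
      ((x - 1) / ((x - 4) * (3 * x - 2))) := by
  rw [onParafermionTruncationCurve_div_div_iff hm2 (mul_ne_zero hm4 h32)]
  ring

end SecondPoint

section ThirdPoint

variable (h2 : (2 : K) ≠ 0) (hm2 : x - 2 ≠ 0) (h21 : 2 * x + 1 ≠ 0)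
include h2 hm2 h21

theorem denom_third_ne_zero : 4 * (x - 2) * (2 * x + 1) ≠ 0 := by
  have h4 : (4 : K) = 2 * 2 := by norm_num
  exact mul_ne_zero (mul_ne_zero (h4 ▸ mul_ne_zero h2 h2) hm2) h21

theorem onWTruncationCurve_third_iff {l : K} :
    OnWTruncationCurve x (-(3 * x + 1)) l ↔
      l = -((x - 1) * (x + 1)) / (4 * (x - 2) * (2 * x + 1)) := by
  rw [OnWTruncationCurve, eq_div_iff (denom_third_ne_zero h2 hm2 h21)]
  constructor <;> intro h <;> linear_combination -h

theorem onParafermionTruncationCurve_third :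
    OnParafermionTruncationCurve (-(3 * x + 1))
      (-((x - 1) * (x + 1)) / (4 * (x - 2) * (2 * x + 1))) := by
  rw [← div_one (-(3 * x + 1)), onParafermionTruncationCurve_div_div_iff one_ne_zero
    (denom_third_ne_zero h2 hm2 h21)]
  ring

end ThirdPoint

theorem onWTruncationCurve_and_onParafermionTruncationCurve_iff {c l : K} (h2 : (2 : K) ≠ 0)
    (hm1 : x - 1 ≠ 0) (hp1 : x + 1 ≠ 0) (hm2 : x - 2 ≠ 0) (hp2 : x + 2 ≠ 0) (hm4 : x - 4 ≠ 0)
    (h34 : 3 * x + 4 ≠ 0) (h32 : 3 * x - 2 ≠ 0) (h21 : 2 * x + 1 ≠ 0) :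
    OnWTruncationCurve x c l ∧ OnParafermionTruncationCurve c l ↔
      (c = 2 * (x - 1) / (x + 2) ∧ l = (x + 1) / ((x - 2) * (3 * x + 4))) ∨
      (c = -(2 * (2 * x - 1)) / (x - 2) ∧ l = (x - 1) / ((x - 4) * (3 * x - 2))) ∨
      (c = -(3 * x + 1) ∧ l = -((x - 1) * (x + 1)) / (4 * (x - 2) * (2 * x + 1))) := by
  constructor
  · rintro ⟨hW, hN⟩
    rcases eq_or_eq_or_eq_of_cubic_eq_zero hp2 hm2
      (cubic_eq_zero_of_onWTruncationCurve_of_onParafermionTruncationCurve hW hN)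
      with rfl | rfl | rfl
    · exact Or.inl ⟨rfl, (onWTruncationCurve_first_iff hp2 hm2 h34 hm1).1 hW⟩
    · exact Or.inr <| Or.inl ⟨rfl, (onWTruncationCurve_second_iff hm2 hm4 h32 hp1).1 hW⟩
    · exact Or.inr <| Or.inr ⟨rfl, (onWTruncationCurve_third_iff h2 hm2 h21).1 hW⟩
  · rintro (⟨rfl, rfl⟩ | ⟨rfl, rfl⟩ | ⟨rfl, rfl⟩)
    · exact ⟨(onWTruncationCurve_first_iff hp2 hm2 h34 hm1).2 rfl,
        onParafermionTruncationCurve_first hp2 hm2 h34⟩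
    · exact ⟨(onWTruncationCurve_second_iff hm2 hm4 h32 hp1).2 rfl,
        onParafermionTruncationCurve_second hm2 hm4 h32⟩
    · exact ⟨(onWTruncationCurve_third_iff h2 hm2 h21).2 rfl,
        onParafermionTruncationCurve_third h2 hm2 h21⟩

/-- For `n ≥ 3`, `n ≠ 4`: the truncation curves of `W^k(sl_n, f_prin)` and of the
parafermion algebra `N^k(sl_2)` intersect in exactly the three displayed points. -/
theorem stmt7 (n : ℕ) (hn : 3 ≤ n) (hn4 : n ≠ 4) (c l : ℂ) :
    (l*((n:ℂ)-2)*(3*(n:ℂ)^2-n-2+c*((n:ℂ)+2)) = ((n:ℂ)-1)*((n:ℂ)+1) ∧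
     4*l*(c+7)*(2*c-1) + (c-2)*(c+4) = 0) ↔
    ((c = 2*((n:ℂ)-1)/((n:ℂ)+2) ∧ l = ((n:ℂ)+1)/(((n:ℂ)-2)*(3*(n:ℂ)+4))) ∨
     (c = -(2*(2*(n:ℂ)-1))/((n:ℂ)-2) ∧ l = ((n:ℂ)-1)/(((n:ℂ)-4)*(3*(n:ℂ)-2))) ∨
     (c = -(3*(n:ℂ)+1) ∧ l = -(((n:ℂ)-1)*((n:ℂ)+1))/(4*((n:ℂ)-2)*(2*(n:ℂ)+1)))) :=
  onWTruncationCurve_and_onParafermionTruncationCurve_iff two_ne_zero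
    (sub_ne_zero.2 (by norm_cast; omega)) (by norm_cast)
    (sub_ne_zero.2 (by norm_cast; omega)) (by norm_cast)
    (sub_ne_zero.2 (by exact_mod_cast hn4)) (by norm_cast)
    (sub_ne_zero.2 (by norm_cast; omega)) (by norm_cast)
end

section
/- For distinct integers m, n ≥ 3, the system λ(m-2)(3m²-m-2+c(m+2)) = (m-1)(m+1) and λ(n+2)(3n²+n-2+c(2-n)) = (1+n)(1-n) has exactly one common solution (c,λ) ∈ ℂ², namely c = -(m-1)(n+1)(n-m+mn)/(m-n) and λ = -(m-n)/((m-2)(n+2)(2n-2m+mn)). -/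
/-!
Write `E₁, E₂` for the two equations, with `M = m`, `N = n`. The combination
`(N² - 1) E₁ + (M² - 1) E₂` has right-hand side `0`, and its left-hand side factors as
`3 l (M + N) (c (M - N) + (M - 1)(N + 1)(N - M + MN))`. Since `E₁` forces `l ≠ 0`, this pins
down `c`; substituting `c` back into `E₁` pins down `l`. The converse is a direct verification.
-/

section TruncationCurves

variable {K : Type*} [Field K]

/-- The truncation curve of `W^{k'}(sl_M, f_prin)` in the `(c, λ)`-plane. -/
def principalTruncationCurve (M c l : K) : Prop :=
  l * (M - 2) * (3 * M ^ 2 - M - 2 + c * (M + 2)) = (M - 1) * (M + 1)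

/-- The conjectural truncation curve of the W-algebra of `sl_{-N}`. -/
def cosetTruncationCurve (N c l : K) : Prop :=
  l * (N + 2) * (3 * N ^ 2 + N - 2 + c * (2 - N)) = (1 + N) * (1 - N)

variable {M N c l : K}

theorem mul_sub_eq_of_truncationCurves (h3 : (3 : K) ≠ 0) (hM : (M - 1) * (M + 1) ≠ 0)
    (hMpN : M + N ≠ 0) (h₁ : principalTruncationCurve M c l) (h₂ : cosetTruncationCurve N c l) :
    c * (M - N) = -((M - 1) * (N + 1) * (N - M + M * N)) := by
  unfold principalTruncationCurve at h₁
  unfold cosetTruncationCurve at h₂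
  have hl : l ≠ 0 := by
    rintro rfl
    exact hM (by linear_combination -h₁)
  have hcomb : 3 * l * (M + N) * (c * (M - N) + (M - 1) * (N + 1) * (N - M + M * N)) = 0 := by
    linear_combination (N ^ 2 - 1) * h₁ + (M ^ 2 - 1) * h₂
  linear_combination (mul_eq_zero.mp hcomb).resolve_left (mul_ne_zero (mul_ne_zero h3 hl) hMpN)

theorem mul_eq_of_principalTruncationCurve (hM : (M - 1) * (M + 1) ≠ 0)
    (hc : c * (M - N) = -((M - 1) * (N + 1) * (N - M + M * N)))
    (h₁ : principalTruncationCurve M c l) :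
    l * ((M - 2) * (N + 2) * (2 * N - 2 * M + M * N)) = -(M - N) := by
  unfold principalTruncationCurve at h₁
  have h : (M - 1) * (M + 1) * (l * ((M - 2) * (N + 2) * (2 * N - 2 * M + M * N)) + (M - N)) = 0 := by
    linear_combination -(M - N) * h₁ + l * (M - 2) * (M + 2) * hc
  linear_combination (mul_eq_zero.mp h).resolve_left hM

theorem truncationCurves_iff_mul_eq (h3 : (3 : K) ≠ 0) (hM : (M - 1) * (M + 1) ≠ 0)
    (hMN : M - N ≠ 0) (hMpN : M + N ≠ 0) :
    (principalTruncationCurve M c l ∧ cosetTruncationCurve N c l) ↔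
      (c * (M - N) = -((M - 1) * (N + 1) * (N - M + M * N)) ∧
        l * ((M - 2) * (N + 2) * (2 * N - 2 * M + M * N)) = -(M - N)) := by
  constructor
  · rintro ⟨h₁, h₂⟩
    have hc := mul_sub_eq_of_truncationCurves h3 hM hMpN h₁ h₂
    exact ⟨hc, mul_eq_of_principalTruncationCurve hM hc h₁⟩
  · rintro ⟨hc, hl⟩
    constructor
    · refine mul_left_cancel₀ hMN ?_
      linear_combination l * (M - 2) * (M + 2) * hc - (M - 1) * (M + 1) * hl
    · refine mul_left_cancel₀ hMN ?_
      linear_combination l * (N + 2) * (2 - N) * hc - (1 + N) * (1 - N) * hl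

end TruncationCurves

theorem stmt12_general (m n : ℕ) (hm : 3 ≤ m) (hmn : m ≠ n) (c l : ℂ) :
    (l*((m:ℂ)-2)*(3*(m:ℂ)^2-m-2+c*((m:ℂ)+2)) = ((m:ℂ)-1)*((m:ℂ)+1) ∧
     l*((n:ℂ)+2)*(3*(n:ℂ)^2+n-2+c*(2-(n:ℂ))) = (1+(n:ℂ))*(1-(n:ℂ))) ↔
    (c = -(((m:ℂ)-1)*((n:ℂ)+1)*((n:ℂ)-m+m*n))/((m:ℂ)-n) ∧
     l = -((m:ℂ)-n)/(((m:ℂ)-2)*((n:ℂ)+2)*(2*(n:ℂ)-2*m+m*n))) := by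
  have hM : ((m : ℂ) - 1) * ((m : ℂ) + 1) ≠ 0 := by
    have : ((m : ℤ) - 1) * ((m : ℤ) + 1) ≠ 0 := mul_ne_zero (by omega) (by omega)
    exact_mod_cast this
  have hMN : (m : ℂ) - n ≠ 0 := sub_ne_zero.mpr (Nat.cast_injective.ne hmn)
  have hMpN : (m : ℂ) + n ≠ 0 := by exact_mod_cast (by omega : m + n ≠ 0)
  have hM2 : (m : ℂ) - 2 ≠ 0 := by exact_mod_cast (by omega : (m : ℤ) - 2 ≠ 0)
  have hN2 : (n : ℂ) + 2 ≠ 0 := by exact_mod_cast (by omega : n + 2 ≠ 0)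
  -- `2n - 2m + mn = (n - 2)(m + 2) + 4` is `≥ 4` for `n ≥ 2` and `≤ -1` for `n ≤ 1`
  have hD : 2 * (n : ℂ) - 2 * m + m * n ≠ 0 := by
    have : 2 * (n : ℤ) - 2 * m + m * n ≠ 0 := by
      rcases Nat.lt_or_ge n 2 with h | h <;> nlinarith
    exact_mod_cast this
  rw [eq_div_iff hMN, eq_div_iff (mul_ne_zero (mul_ne_zero hM2 hN2) hD)]
  exact truncationCurves_iff_mul_eq three_ne_zero hM hMN hMpN

/-- For distinct `m, n ≥ 3`, the truncation curve of `W^{k'}(sl_m, f_prin)` and the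
(conjectural) truncation curve of the W-algebra of `sl_{-n}` intersect in exactly
one point. -/
theorem stmt12 (m n : ℕ) (hm : 3 ≤ m) (hn : 3 ≤ n) (hmn : m ≠ n) (c l : ℂ) :
    (l*((m:ℂ)-2)*(3*(m:ℂ)^2-m-2+c*((m:ℂ)+2)) = ((m:ℂ)-1)*((m:ℂ)+1) ∧
     l*((n:ℂ)+2)*(3*(n:ℂ)^2+n-2+c*(2-(n:ℂ))) = (1+(n:ℂ))*(1-(n:ℂ))) ↔
    (c = -(((m:ℂ)-1)*((n:ℂ)+1)*((n:ℂ)-m+m*n))/((m:ℂ)-n) ∧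
     l = -((m:ℂ)-n)/(((m:ℂ)-2)*((n:ℂ)+2)*(2*(n:ℂ)-2*m+m*n))) :=
  stmt12_general m n hm hmn c l
end
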